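/- arXiv:2310.02715 — 2 statements merged into one kernel-verified Lean document; each statement's English description precedes it below -/
import Mathlib

section
/- The function R ↦ (R²/(R−1))·((R−1)/R)^(1/R) is strictly increasing for real R ≥ 3. -/
/-! Write the function as `exp (logG R)` with
`logG R = (2 - 1/R) log R + (1/R - 1) log (R - 1)`. Then
`R² · logG'(R) = log (R / (R - 1)) + (R - 1)`, which is positive for every `R > 1`;
so the function is strictly increasing on all of `(1, ∞)`. -/

open Real Set

noncomputable def logG (R : ℝ) : ℝ :=
  (2 - R⁻¹) * log R + (R⁻¹ - 1) * log (R - 1)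

lemma exp_logG {R : ℝ} (hR : 1 < R) :
    exp (logG R) = R ^ 2 / (R - 1) * ((R - 1) / R) ^ (1 / R) := by
  have hR0 : 0 < R := by linarith
  have hR1 : 0 < R - 1 := by linarith
  rw [rpow_def_of_pos (div_pos hR1 hR0), ← exp_log (by positivity : 0 < R ^ 2 / (R - 1)),
    ← exp_add, log_div (by positivity) hR1.ne', log_div hR1.ne' hR0.ne', log_pow, logG]
  congr 1
  push_cast
  ring

lemma hasDerivAt_logG {R : ℝ} (hR : 1 < R) :
    HasDerivAt logG ((log R - log (R - 1) + (R - 1)) / R ^ 2) R := by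
  have hR0 : R ≠ 0 := by linarith
  have hR1 : R - 1 ≠ 0 := by linarith
  have hlog : HasDerivAt log R⁻¹ R := hasDerivAt_log hR0
  have hlog_sub : HasDerivAt (fun x => log (x - 1)) (R - 1)⁻¹ R := by
    simpa using ((hasDerivAt_id R).sub_const 1).log hR1
  have hinv : HasDerivAt (·⁻¹) (-(R ^ 2)⁻¹) R := hasDerivAt_inv hR0
  refine (((hinv.const_sub 2).mul hlog).add ((hinv.sub_const 1).mul hlog_sub)).congr_deriv ?_
  field_simp
  ring

lemma strictMonoOn_logG : StrictMonoOn logG (Ioi 1) := by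
  refine strictMonoOn_of_hasDerivWithinAt_pos (convex_Ioi 1)
    (fun R hR => (hasDerivAt_logG hR).continuousAt.continuousWithinAt)
    (fun R hR => (hasDerivAt_logG (interior_subset hR)).hasDerivWithinAt) ?_
  intro R hR
  rw [interior_Ioi, mem_Ioi] at hR
  have hlog : log (R - 1) < log R := log_lt_log (by linarith) (by linarith)
  have hnum : 0 < log R - log (R - 1) + (R - 1) := by linarith
  positivity

theorem stmt_4 :
    StrictMonoOn (fun R : ℝ => R ^ 2 / (R - 1) * ((R - 1) / R) ^ (1 / R))
      (Set.Ici (3 : ℝ)) := by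
  have hmono : StrictMonoOn (fun R : ℝ => R ^ 2 / (R - 1) * ((R - 1) / R) ^ (1 / R)) (Ioi 1) :=
    (exp_strictMono.comp_strictMonoOn strictMonoOn_logG).congr fun R hR => exp_logG hR
  exact hmono.mono (Ici_subset_Ioi.2 (by norm_num))
end

section
/- For integers R ≥ 3, w ≥ 1, and prime power q with binom(wR, R−1) ≤ q+1, the quantity 1 − G/(q^{R−2}(q+1)), where G = q^{R−3}·binom(wR,R−1)·(q + 1/2 − (1/2)·binom(wR,R−1)), is strictly less than exp((R^R/R!)·(−(w−1)^{R−1}/(q+1) + w^{2R−2}·R^R/(2q²·R!))). -/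
/-!
Write `B = binom(wR, R-1)` and `P = R^R/R! = R^(R-1)/(R-1)!`. The descending-factorial bounds on
binomial coefficients give `P (w-1)^(R-1) ≤ B ≤ P w^(R-1)`. After cancelling `q^(R-3)` the defect is
`x = B/(q+1) - B(B-1)/(2q(q+1))`, so `x > P (w-1)^(R-1)/(q+1) - (P w^(R-1))^2/(2q^2)`, and
`1 - x ≤ exp(-x)` finishes the proof.
-/

open Real
open scoped Nat

lemma pow_self_div_factorial {n : ℕ} (hn : 0 < n) :
    (n : ℝ) ^ n / n ! = (n : ℝ) ^ (n - 1) / (n - 1)! := by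
  obtain ⟨m, rfl⟩ := Nat.exists_eq_add_of_lt hn
  simp only [zero_add, Nat.add_sub_cancel, Nat.factorial_succ, Nat.cast_mul]
  rw [pow_succ', mul_div_mul_left _ _ (by positivity)]

lemma pow_div_factorial_mul_le_choose {w : ℕ} (hw : 1 ≤ w) (R : ℕ) :
    (R : ℝ) ^ (R - 1) / (R - 1)! * ((w : ℝ) - 1) ^ (R - 1) ≤ (w * R).choose (R - 1) := by
  refine le_trans ?_ (Nat.pow_le_choose (R - 1) (w * R))
  have hcast : (R : ℝ) * ((w : ℝ) - 1) = ((w - 1) * R : ℕ) := by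
    push_cast [Nat.cast_sub hw]
    ring
  rw [div_mul_eq_mul_div, ← mul_pow, hcast]
  gcongr
  rw [Nat.sub_one_mul]
  have : R ≤ w * R := Nat.le_mul_of_pos_left R hw
  omega

lemma choose_le_pow_div_factorial_mul (w R : ℕ) :
    ((w * R).choose (R - 1) : ℝ) ≤ (R : ℝ) ^ (R - 1) / (R - 1)! * (w : ℝ) ^ (R - 1) := by
  refine (Nat.choose_le_pow_div (R - 1) (w * R)).trans_eq ?_
  push_cast
  ring

lemma div_sub_sq_div_lt {q B P a c : ℝ} (hq : 0 < q) (hB : 0 < B) (hlo : P * a ≤ B)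
    (hhi : B ≤ P * c) :
    P * a / (q + 1) - (P * c) ^ 2 / (2 * q ^ 2) < B * (q + 1 / 2 - 1 / 2 * B) / (q * (q + 1)) := by
  have hsplit : B * (q + 1 / 2 - 1 / 2 * B) / (q * (q + 1))
      = B / (q + 1) - B * (B - 1) / (2 * q * (q + 1)) := by
    field_simp
    ring
  have hlin : P * a / (q + 1) ≤ B / (q + 1) := by gcongr
  have hquad : B * (B - 1) / (2 * q * (q + 1)) < (P * c) ^ 2 / (2 * q ^ 2) := by
    calc B * (B - 1) / (2 * q * (q + 1)) < B ^ 2 / (2 * q ^ 2) := by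
          rw [div_lt_div_iff₀ (by positivity) (by positivity)]
          nlinarith [mul_pos (mul_pos hq hB) (add_pos hB hq)]
      _ ≤ (P * c) ^ 2 / (2 * q ^ 2) := by gcongr
  linarith

theorem stmt_12_general (R w q : ℕ) (hR : 3 ≤ R) (hw : 1 ≤ w) (hq : IsPrimePow q) :
    1 - ((q : ℝ) ^ (R - 3) * (Nat.choose (w * R) (R - 1) : ℝ) *
          ((q : ℝ) + 1 / 2 - (1 / 2) * (Nat.choose (w * R) (R - 1) : ℝ))) /
        ((q : ℝ) ^ (R - 2) * ((q : ℝ) + 1)) <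
      Real.exp (((R : ℝ) ^ R / (R.factorial : ℝ)) *
        (-(((w : ℝ) - 1) ^ (R - 1)) / ((q : ℝ) + 1) +
          (w : ℝ) ^ (2 * R - 2) * (R : ℝ) ^ R / (2 * (q : ℝ) ^ 2 * (R.factorial : ℝ)))) := by
  have hq0 : (0 : ℝ) < q := by exact_mod_cast hq.pos
  have hB : (0 : ℝ) < (w * R).choose (R - 1) := by
    have : R - 1 ≤ w * R := (Nat.sub_le R 1).trans (Nat.le_mul_of_pos_left R hw)
    exact_mod_cast Nat.choose_pos this
  set B : ℝ := ((w * R).choose (R - 1) : ℝ)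
  have hcancel : (q : ℝ) ^ (R - 3) * B * (q + 1 / 2 - 1 / 2 * B) / (q ^ (R - 2) * (q + 1))
      = B * (q + 1 / 2 - 1 / 2 * B) / (q * (q + 1)) := by
    rw [show R - 2 = R - 3 + 1 by omega, pow_succ]
    field_simp
  have hP := pow_self_div_factorial (show 0 < R by omega)
  rw [hcancel, show 2 * R - 2 = (R - 1) * 2 by omega, pow_mul]
  refine (one_sub_le_exp_neg _).trans_lt (exp_lt_exp.mpr ?_)
  have hlo : (R : ℝ) ^ R / R ! * ((w : ℝ) - 1) ^ (R - 1) ≤ B := by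
    rw [hP]
    exact pow_div_factorial_mul_le_choose hw R
  have hhi : B ≤ (R : ℝ) ^ R / R ! * (w : ℝ) ^ (R - 1) := by
    rw [hP]
    exact choose_le_pow_div_factorial_mul w R
  have hdefect := div_sub_sq_div_lt hq0 hB hlo hhi
  exact (neg_lt_neg hdefect).trans_eq (by ring)

theorem stmt_12 (R w q : ℕ) (hR : 3 ≤ R) (hw : 1 ≤ w) (hq : IsPrimePow q)
    (hB : Nat.choose (w * R) (R - 1) ≤ q + 1) :
    1 - ((q : ℝ) ^ (R - 3) * (Nat.choose (w * R) (R - 1) : ℝ) *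
          ((q : ℝ) + 1 / 2 - (1 / 2) * (Nat.choose (w * R) (R - 1) : ℝ))) /
        ((q : ℝ) ^ (R - 2) * ((q : ℝ) + 1)) <
      Real.exp (((R : ℝ) ^ R / (R.factorial : ℝ)) *
        (-(((w : ℝ) - 1) ^ (R - 1)) / ((q : ℝ) + 1) +
          (w : ℝ) ^ (2 * R - 2) * (R : ℝ) ^ R / (2 * (q : ℝ) ^ 2 * (R.factorial : ℝ)))) :=
  stmt_12_general R w q hR hw hq
end
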